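/- arXiv:2509.04750 — 2 statements merged into one kernel-verified Lean document; each statement's English description precedes it below -/
import Mathlib

section
/- If σ ≤ (1 - r̲)/(2r̲), then for every θ ∈ ℝ the policymaker's ex post welfare U(θ; θ̲) in the signaling equilibrium is nonincreasing in θ̲ (equivalently, nonincreasing in the intervention level r'), and it is strictly decreasing for θ in the intervention region [θ̲, θ̄). -/
/-!
On each of its four pieces the welfare `θ ↦ U(θ; θ̲)` is affine, and the pieces glue
continuously: the transition piece `m` meets `θ - θ̲` at `θ̄` and meets `θ` at `θ'`,
and has slope `1 + 1/(2σ)` larger than both. Hence, on `[0, 1 - r̲]`,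
`U(θ; θ̲) = max 0 (min θ (max (θ - θ̲) m))`. Both `θ - θ̲` and `m` are nonincreasing in `θ̲`,
the latter because `σ ≤ (1 - r̲)/(2r̲)` means `r̲/(1 - r̲) ≤ 1/(2σ)`, so `U` is too.
On `[θ̲₂, θ̄₂)` we have `U(θ; θ̲₂) = θ - θ̲₂ < θ - θ̲₁ ≤ U(θ; θ̲₁)`.
-/

namespace Signaling

/-- `θ̄` in the paper. -/
noncomputable def thetaBar (rl σ tl : ℝ) : ℝ := 2 * σ + (1 - 2 * σ / (1 - rl)) * tl

/-- `θ'` in the paper. -/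
noncomputable def thetaPrime (rl σ tl : ℝ) : ℝ := 2 * σ + (1 - 2 * σ * rl / (1 - rl)) * tl

noncomputable def transitionWelfare (rl σ tl θ : ℝ) : ℝ :=
  (1 + 1 / (2 * σ)) * θ - (1 / (2 * σ) - rl / (1 - rl)) * tl - 1

noncomputable def welfare (rl σ tl θ : ℝ) : ℝ :=
  if θ < tl then 0
  else if θ < thetaBar rl σ tl then θ - tl
  else if θ < thetaPrime rl σ tl then transitionWelfare rl σ tl θ
  else θ

variable {rl σ : ℝ}

theorem transitionWelfare_sub_sub (hrl : rl < 1) (hσ : 0 < σ) (tl θ : ℝ) :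
    transitionWelfare rl σ tl θ - (θ - tl) = (θ - thetaBar rl σ tl) / (2 * σ) := by
  have : 1 - rl ≠ 0 := by linarith
  unfold transitionWelfare thetaBar
  field_simp
  ring

theorem transitionWelfare_sub_self (hrl : rl < 1) (hσ : 0 < σ) (tl θ : ℝ) :
    transitionWelfare rl σ tl θ - θ = (θ - thetaPrime rl σ tl) / (2 * σ) := by
  have : 1 - rl ≠ 0 := by linarith
  unfold transitionWelfare thetaPrime
  field_simp
  ring

theorem le_thetaBar (hrl : rl < 1) (hσ : 0 < σ) {tl : ℝ} (htl : tl ≤ 1 - rl) :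
    tl ≤ thetaBar rl σ tl := by
  have hpos : 0 < 1 - rl := by linarith
  have : 2 * σ / (1 - rl) * tl ≤ 2 * σ := by
    rw [div_mul_eq_mul_div, div_le_iff₀ hpos]
    gcongr
  unfold thetaBar
  linarith

theorem transitionWelfare_antitone (hslope : rl / (1 - rl) ≤ 1 / (2 * σ)) (θ : ℝ) :
    Antitone fun tl => transitionWelfare rl σ tl θ := by
  intro t₁ t₂ ht
  unfold transitionWelfare
  nlinarith

theorem welfare_eq_max_min (hrl : rl < 1) (hσ : 0 < σ) {tl : ℝ} (htl : tl ∈ Set.Icc 0 (1 - rl))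
    (θ : ℝ) :
    welfare rl σ tl θ = max 0 (min θ (max (θ - tl) (transitionWelfare rl σ tl θ))) := by
  obtain ⟨htl₀, htl₁⟩ := htl
  have hbar := le_thetaBar hrl hσ htl₁
  have hm := transitionWelfare_sub_sub hrl hσ tl θ
  have hm' := transitionWelfare_sub_self hrl hσ tl θ
  have h2σ : 0 < 2 * σ := by linarith
  unfold welfare
  split_ifs with hlow hint htrans
  · have : transitionWelfare rl σ tl θ ≤ θ - tl := by
      have := div_neg_of_neg_of_pos (sub_neg.2 (hlow.trans_le hbar)) h2σ
      linarith
    rw [max_eq_left this, min_eq_right (by linarith), max_eq_left (by linarith)]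
  · have : transitionWelfare rl σ tl θ ≤ θ - tl := by
      have := div_neg_of_neg_of_pos (sub_neg.2 hint) h2σ
      linarith
    rw [max_eq_left this, min_eq_right (by linarith), max_eq_right (by linarith)]
  · have hlo : θ - tl ≤ transitionWelfare rl σ tl θ := by
      have := div_nonneg (sub_nonneg.2 (not_lt.1 hint)) h2σ.le
      linarith
    have hhi : transitionWelfare rl σ tl θ ≤ θ := by
      have := div_neg_of_neg_of_pos (sub_neg.2 htrans) h2σ
      linarith
    rw [max_eq_right hlo, min_eq_right hhi, max_eq_right (by linarith)]
  · have : θ ≤ transitionWelfare rl σ tl θ := by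
      have := div_nonneg (sub_nonneg.2 (not_lt.1 htrans)) h2σ.le
      linarith
    rw [max_eq_right (by linarith : θ - tl ≤ _), min_eq_left this, max_eq_right (by linarith)]

theorem welfare_antitoneOn (hrl : rl < 1) (hσ : 0 < σ) (hslope : rl / (1 - rl) ≤ 1 / (2 * σ))
    (θ : ℝ) : AntitoneOn (fun tl => welfare rl σ tl θ) (Set.Icc 0 (1 - rl)) := by
  intro t₁ ht₁ t₂ ht₂ ht
  simp only [welfare_eq_max_min hrl hσ ht₁, welfare_eq_max_min hrl hσ ht₂]
  gcongr
  exact transitionWelfare_antitone hslope θ ht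

theorem sub_le_welfare (hrl : rl < 1) (hσ : 0 < σ) {tl : ℝ} (htl : tl ∈ Set.Icc 0 (1 - rl))
    (θ : ℝ) : θ - tl ≤ welfare rl σ tl θ := by
  rw [welfare_eq_max_min hrl hσ htl]
  exact le_max_of_le_right (le_min (sub_le_self θ htl.1) (le_max_left _ _))

theorem welfare_of_mem_Ico {tl θ : ℝ} (hθ : θ ∈ Set.Ico tl (thetaBar rl σ tl)) :
    welfare rl σ tl θ = θ - tl := by
  simp [welfare, not_lt.2 hθ.1, hθ.2]

theorem div_one_sub_le_one_div_two_mul (hrl₀ : 0 < rl) (hrl : rl < 1) (hσ : 0 < σ)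
    (hσle : σ ≤ (1 - rl) / (2 * rl)) : rl / (1 - rl) ≤ 1 / (2 * σ) := by
  rw [le_div_iff₀ (by positivity)] at hσle
  rw [div_le_div_iff₀ (by linarith) (by positivity)]
  linarith

end Signaling

open Signaling in
/-- If `σ ≤ (1-r̲)/(2r̲)`, the policymaker's ex post welfare is nonincreasing in the
lower threshold `θ̲` for every `θ`, and strictly decreasing for `θ` in the
intervention region. -/
theorem stmt_10 (rl σ : ℝ) (h0 : 0 < rl) (h1 : rl < 1) (hσ : 0 < σ)
    (hσle : σ ≤ (1 - rl) / (2 * rl))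
    (U : ℝ → ℝ → ℝ)
    (hU : U = fun tl θ =>
      if θ < tl then 0
      else if θ < 2 * σ + (1 - 2 * σ / (1 - rl)) * tl then θ - tl
      else if θ < 2 * σ + (1 - 2 * σ * rl / (1 - rl)) * tl then
        (1 + 1 / (2 * σ)) * θ - (1 / (2 * σ) - rl / (1 - rl)) * tl - 1
      else θ) :
    ∀ tl₁ tl₂, tl₁ ∈ Set.Icc (0 : ℝ) (1 - rl) → tl₂ ∈ Set.Icc (0 : ℝ) (1 - rl) →
      tl₁ < tl₂ →
      (∀ θ : ℝ, U tl₂ θ ≤ U tl₁ θ) ∧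
      (∀ θ : ℝ, tl₂ ≤ θ → θ < 2 * σ + (1 - 2 * σ / (1 - rl)) * tl₂ →
        U tl₂ θ < U tl₁ θ) := by
  have hUw : U = welfare rl σ := hU
  subst hUw
  intro tl₁ tl₂ htl₁ htl₂ hlt
  have hslope := div_one_sub_le_one_div_two_mul h0 h1 hσ hσle
  refine ⟨fun θ => welfare_antitoneOn h1 hσ hslope θ htl₁ htl₂ hlt.le, fun θ hθ₁ hθ₂ => ?_⟩
  calc welfare rl σ tl₂ θ = θ - tl₂ := welfare_of_mem_Ico ⟨hθ₁, hθ₂⟩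
    _ < θ - tl₁ := by linarith
    _ ≤ welfare rl σ tl₁ θ := sub_le_welfare h1 hσ htl₁ θ
end

section
/- If σ > (1 - r̲)/(2r̲), then for θ̲₁ < θ̲₂ in [0, 1-r̲] and any θ with θ̄(θ̲₁) ≤ θ and θ < θ'(θ̲₂), the welfare satisfies U(θ; θ̲₂) > U(θ; θ̲₁); i.e., a more aggressive intervention strictly benefits the policymaker on the overlapping partial-attack region. -/
/-!
Under `2σr̲ > 1 - r̲` both thresholds `θ̄` and `θ'` are decreasing in `θ̲`, and `θ̲ ≤ θ̄(θ̲)` on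
`[0, 1 - r̲]`. Hence a state `θ` with `θ̄(θ̲₁) ≤ θ < θ'(θ̲₂)` lies in the partial-attack region for
both interventions, where welfare is affine in `θ̲` with slope `r̲/(1-r̲) - 1/(2σ) > 0`.
-/

namespace Intervention

noncomputable section

/-- `θ̄(θ̲)` -/
def thetaBar (rl σ tl : ℝ) : ℝ := 2 * σ + (1 - 2 * σ / (1 - rl)) * tl

/-- `θ'(θ̲)` -/
def thetaPrime (rl σ tl : ℝ) : ℝ := 2 * σ + (1 - 2 * σ * rl / (1 - rl)) * tl

def partialWelfare (rl σ tl θ : ℝ) : ℝ :=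
  (1 + 1 / (2 * σ)) * θ - (1 / (2 * σ) - rl / (1 - rl)) * tl - 1

def welfare (rl σ tl θ : ℝ) : ℝ :=
  if θ < tl then 0
  else if θ < thetaBar rl σ tl then θ - tl
  else if θ < thetaPrime rl σ tl then partialWelfare rl σ tl θ
  else θ

variable {rl σ : ℝ}

lemma one_sub_lt_two_mul_mul (h0 : 0 < rl) (hσ : σ > (1 - rl) / (2 * rl)) :
    1 - rl < 2 * σ * rl := by
  rw [gt_iff_lt, div_lt_iff₀ (by positivity)] at hσ
  linarith

lemma thetaBar_antitone (h1 : rl < 1) (hσ : 1 - rl ≤ 2 * σ) : Antitone (thetaBar rl σ) := by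
  have : 1 ≤ 2 * σ / (1 - rl) := by rwa [one_le_div (by linarith)]
  intro s t hst
  unfold thetaBar
  nlinarith

lemma thetaPrime_antitone (h1 : rl < 1) (hσ : 1 - rl ≤ 2 * σ * rl) :
    Antitone (thetaPrime rl σ) := by
  have : 1 ≤ 2 * σ * rl / (1 - rl) := by rwa [one_le_div (by linarith)]
  intro s t hst
  unfold thetaPrime
  nlinarith

lemma le_thetaBar (h1 : rl < 1) (hσ : 0 ≤ σ) {tl : ℝ} (htl : tl ≤ 1 - rl) :
    tl ≤ thetaBar rl σ tl := by
  have hdiv : 2 * σ / (1 - rl) * tl ≤ 2 * σ := by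
    rw [div_mul_eq_mul_div, div_le_iff₀ (by linarith)]
    nlinarith
  unfold thetaBar
  linarith

lemma welfare_of_mem_Ico {tl θ : ℝ} (htl : tl ≤ θ)
    (hθ : θ ∈ Set.Ico (thetaBar rl σ tl) (thetaPrime rl σ tl)) :
    welfare rl σ tl θ = partialWelfare rl σ tl θ := by
  simp [welfare, not_lt.2 htl, not_lt.2 hθ.1, hθ.2]

lemma partialWelfare_strictMono (h1 : rl < 1) (h0σ : 0 < σ) (hσ : 1 - rl < 2 * σ * rl)
    (θ : ℝ) : StrictMono fun tl => partialWelfare rl σ tl θ := by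
  have hslope : 1 / (2 * σ) < rl / (1 - rl) := by
    rw [div_lt_div_iff₀ (by positivity) (by linarith)]
    linarith
  intro s t hst
  simp only [partialWelfare]
  nlinarith

end

end Intervention

open Intervention in
theorem stmt_11_general (rl σ : ℝ) (h0 : 0 < rl) (h1 : rl < 1)
    (hσgt : σ > (1 - rl) / (2 * rl))
    (U : ℝ → ℝ → ℝ)
    (hU : U = fun tl θ =>
      if θ < tl then 0
      else if θ < 2 * σ + (1 - 2 * σ / (1 - rl)) * tl then θ - tl
      else if θ < 2 * σ + (1 - 2 * σ * rl / (1 - rl)) * tl then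
        (1 + 1 / (2 * σ)) * θ - (1 / (2 * σ) - rl / (1 - rl)) * tl - 1
      else θ) :
    ∀ tl₁ tl₂, tl₁ ∈ Set.Icc (0 : ℝ) (1 - rl) → tl₂ ∈ Set.Icc (0 : ℝ) (1 - rl) →
      tl₁ < tl₂ →
      2 * σ + (1 - 2 * σ / (1 - rl)) * tl₁ ≤
        2 * σ + (1 - 2 * σ * rl / (1 - rl)) * tl₂ →
      ∀ θ : ℝ, 2 * σ + (1 - 2 * σ / (1 - rl)) * tl₁ ≤ θ →
        θ < 2 * σ + (1 - 2 * σ * rl / (1 - rl)) * tl₂ →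
        U tl₁ θ < U tl₂ θ := by
  intro tl₁ tl₂ h₁ h₂ hlt _ θ hθ₁ hθ₂
  have hcross := one_sub_lt_two_mul_mul h0 hσgt
  have hσ : 0 < σ := by nlinarith
  have hbar := thetaBar_antitone (σ := σ) h1 (by nlinarith)
  have hprime := thetaPrime_antitone (σ := σ) h1 hcross.le
  have hmem₁ : θ ∈ Set.Ico (thetaBar rl σ tl₁) (thetaPrime rl σ tl₁) :=
    ⟨hθ₁, hθ₂.trans_le (hprime hlt.le)⟩
  have hmem₂ : θ ∈ Set.Ico (thetaBar rl σ tl₂) (thetaPrime rl σ tl₂) :=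
    ⟨(hbar hlt.le).trans hθ₁, hθ₂⟩
  have hle₁ : tl₁ ≤ θ := (le_thetaBar h1 hσ.le h₁.2).trans hθ₁
  have hle₂ : tl₂ ≤ θ := (le_thetaBar h1 hσ.le h₂.2).trans hmem₂.1
  subst hU
  change welfare rl σ tl₁ θ < welfare rl σ tl₂ θ
  rw [welfare_of_mem_Ico hle₁ hmem₁, welfare_of_mem_Ico hle₂ hmem₂]
  exact partialWelfare_strictMono h1 hσ hcross θ hlt

/-- If `σ > (1-r̲)/(2r̲)`, a more aggressive intervention strictly raises welfare on
the overlapping partial-attack region: for `θ̲₁ < θ̲₂` and `θ̄(θ̲₁) ≤ θ < θ'(θ̲₂)`,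
`U(θ; θ̲₂) > U(θ; θ̲₁)`. -/
theorem stmt_11 (rl σ : ℝ) (h0 : 0 < rl) (h1 : rl < 1) (hσ : 0 < σ)
    (hσgt : σ > (1 - rl) / (2 * rl))
    (U : ℝ → ℝ → ℝ)
    (hU : U = fun tl θ =>
      if θ < tl then 0
      else if θ < 2 * σ + (1 - 2 * σ / (1 - rl)) * tl then θ - tl
      else if θ < 2 * σ + (1 - 2 * σ * rl / (1 - rl)) * tl then
        (1 + 1 / (2 * σ)) * θ - (1 / (2 * σ) - rl / (1 - rl)) * tl - 1
      else θ) :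
    ∀ tl₁ tl₂, tl₁ ∈ Set.Icc (0 : ℝ) (1 - rl) → tl₂ ∈ Set.Icc (0 : ℝ) (1 - rl) →
      tl₁ < tl₂ →
      2 * σ + (1 - 2 * σ / (1 - rl)) * tl₁ ≤
        2 * σ + (1 - 2 * σ * rl / (1 - rl)) * tl₂ →
      ∀ θ : ℝ, 2 * σ + (1 - 2 * σ / (1 - rl)) * tl₁ ≤ θ →
        θ < 2 * σ + (1 - 2 * σ * rl / (1 - rl)) * tl₂ →
        U tl₁ θ < U tl₂ θ :=
  stmt_11_general rl σ h0 h1 hσgt U hU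
end
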